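/- arXiv:1602.02092 — 8 statements merged into one kernel-verified Lean document; each statement's English description precedes it below -/
import Mathlib

section
/- Let θ < 0 and define L(a,b) = -(θ + √(θ²-2b))/2 + a²/(2(√(θ²-2b) - θ)) for b < θ²/2 (and L = +∞ otherwise). Then for any x ∈ ℝ and y > 0, the Fenchel–Legendre transform sup_{(a,b): b < θ²/2} {ax + by - L(a,b)} equals θ(1 - x² + θy)/2 + (1+x²)²/(8y). -/
open Real

theorem legendre_transform_stable
    (θ : ℝ) (hθ : θ < 0) (L : ℝ → ℝ → ℝ)
    (hL : ∀ a b : ℝ, b < θ ^ 2 / 2 →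
      L a b = -(θ + Real.sqrt (θ ^ 2 - 2 * b)) / 2 +
        a ^ 2 / (2 * (Real.sqrt (θ ^ 2 - 2 * b) - θ)))
    (x y : ℝ) (hy : 0 < y) :
    sSup {v : ℝ | ∃ a b : ℝ, b < θ ^ 2 / 2 ∧ v = a * x + b * y - L a b}
      = θ * (1 - x ^ 2 + θ * y) / 2 + (1 + x ^ 2) ^ 2 / (8 * y) := by
  set M := θ * (1 - x ^ 2 + θ * y) / 2 + (1 + x ^ 2) ^ 2 / (8 * y) with hM
  set s₀ : ℝ := (x ^ 2 + 1) / (2 * y) with hs₀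
  have hs₀pos : 0 < s₀ := by positivity
  have key : ∀ a s : ℝ, 0 < s - θ →
      M - (a * x + (θ ^ 2 - s ^ 2) / 2 * y - (-(θ + s) / 2 + a ^ 2 / (2 * (s - θ))))
        = (a - x * (s - θ)) ^ 2 / (2 * (s - θ)) + y / 2 * (s - s₀) ^ 2 := by
    intro a s hd
    have hd' : s - θ ≠ 0 := ne_of_gt hd
    rw [hM, hs₀]
    field_simp
    ring
  have hmem : M ∈ {v : ℝ | ∃ a b : ℝ, b < θ ^ 2 / 2 ∧ v = a * x + b * y - L a b} := by
    refine ⟨x * (s₀ - θ), (θ ^ 2 - s₀ ^ 2) / 2, by nlinarith, ?_⟩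
    have h1 : θ ^ 2 - 2 * ((θ ^ 2 - s₀ ^ 2) / 2) = s₀ ^ 2 := by ring
    rw [hL _ _ (by nlinarith), h1, Real.sqrt_sq hs₀pos.le]
    have hd : (0:ℝ) < s₀ - θ := by linarith
    have hk := key (x * (s₀ - θ)) s₀ hd
    have : (x * (s₀ - θ) - x * (s₀ - θ)) ^ 2 / (2 * (s₀ - θ)) + y / 2 * (s₀ - s₀) ^ 2 = 0 := by
      simp
    linarith [hk, this]
  have hub : ∀ v ∈ {v : ℝ | ∃ a b : ℝ, b < θ ^ 2 / 2 ∧ v = a * x + b * y - L a b}, v ≤ M := by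
    rintro v ⟨a, b, hb, rfl⟩
    set s := Real.sqrt (θ ^ 2 - 2 * b) with hs
    have hs2 : s ^ 2 = θ ^ 2 - 2 * b := Real.sq_sqrt (by linarith)
    have hs0 : 0 ≤ s := Real.sqrt_nonneg _
    have hd : 0 < s - θ := by linarith
    rw [hL a b hb, ← hs]
    have hb' : b = (θ ^ 2 - s ^ 2) / 2 := by linarith
    have hk := key a s hd
    have hpos : 0 ≤ (a - x * (s - θ)) ^ 2 / (2 * (s - θ)) + y / 2 * (s - s₀) ^ 2 := by
      positivity
    rw [hb']
    linarith [hk, hpos]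
  exact le_antisymm (csSup_le ⟨M, hmem⟩ hub) (le_csSup ⟨M, hub⟩ hmem)
end

section
/- Let θ < 0 and define L(a,b) as above on the domain {b < θ²/2}. Then for any x ∈ ℝ and y ≤ 0, the Fenchel–Legendre transform sup_{(a,b): b < θ²/2} {ax + by - L(a,b)} equals +∞. -/
open Real

theorem legendre_transform_stable_infinite
    (θ : ℝ) (hθ : θ < 0) (L : ℝ → ℝ → ℝ)
    (hL : ∀ a b : ℝ, b < θ ^ 2 / 2 →
      L a b = -(θ + Real.sqrt (θ ^ 2 - 2 * b)) / 2 +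
        a ^ 2 / (2 * (Real.sqrt (θ ^ 2 - 2 * b) - θ)))
    (x y : ℝ) (hy : y ≤ 0) :
    sSup {v : EReal | ∃ a b : ℝ, b < θ ^ 2 / 2 ∧
      v = ((a * x + b * y - L a b : ℝ) : EReal)} = ⊤ := by
  rw [sSup_eq_top]
  intro M hM
  obtain ⟨m, hMm, -⟩ := EReal.exists_between_coe_real hM
  obtain ⟨t, ht⟩ : ∃ t : ℝ, t = max |θ| (2 * m - θ) + 1 := ⟨_, rfl⟩
  have habs : |θ| ≤ t - 1 := by
    rw [ht]; simp
  have hmt : 2 * m - θ ≤ t - 1 := by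
    rw [ht]; simp
  have ht0 : 0 < t := by
    have := abs_nonneg θ; linarith
  have htθ' : θ < t := lt_of_le_of_lt (le_abs_self θ) (by linarith)
  obtain ⟨b, hb⟩ : ∃ b : ℝ, b = (θ ^ 2 - t ^ 2) / 2 := ⟨_, rfl⟩
  have ht2 : θ ^ 2 ≤ t ^ 2 := by nlinarith [sq_abs θ, abs_nonneg θ]
  have hbdom : b < θ ^ 2 / 2 := by
    have : 0 < t ^ 2 := by positivity
    rw [hb]; linarith
  refine ⟨((0 * x + b * y - L 0 b : ℝ) : EReal), ⟨0, b, hbdom, rfl⟩, ?_⟩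
  have hsqrt : Real.sqrt (θ ^ 2 - 2 * b) = t := by
    rw [hb]
    have : θ ^ 2 - 2 * ((θ ^ 2 - t ^ 2) / 2) = t ^ 2 := by ring
    rw [this, Real.sqrt_sq ht0.le]
  have hLval : L 0 b = -(θ + t) / 2 := by
    rw [hL 0 b hbdom, hsqrt]
    norm_num
  have hby : 0 ≤ b * y := by
    have hbneg : b ≤ 0 := by rw [hb]; linarith
    nlinarith
  have hval : m < 0 * x + b * y - L 0 b := by
    rw [hLval]; linarith
  exact lt_trans hMm (by exact_mod_cast hval)
end

section
/- Let θ < 0 and define I_θ(x,y) = θ(1 - x² + θy)/2 + (1+x²)²/(8y) for y > 0 and I_θ(x,y) = +∞ for y ≤ 0, and f(x,y) = (x²-1)/(2y). Then for every z ∈ ℝ, inf{ I_θ(x,y) : y > 0, f(x,y) = z } equals -(z-θ)²/(4z) if z ≤ θ/3, and equals 2z - θ if z ≥ θ/3. -/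
/-!
On the fiber `(x² - 1) / (2y) = z` one has `x² = 1 + 2zy`, which turns the rate into
`(z - θ)² y / 2 + 1 / (2y) + z`, to be minimised over the `y > 0` with `1 + 2zy ≥ 0`.
By AM-GM its unconstrained minimum is `|z - θ| + z`, attained at `y = 1 / |z - θ|`; this point
is admissible exactly when `z ≥ θ / 3`. For `z ≤ θ / 3` the function is still decreasing up to
the endpoint `y = -1 / (2z)` (that is, `x = 0`), where it equals `-(z - θ)² / (4z)`.
-/

open Real Set

noncomputable def rateOnFiber (θ z y : ℝ) : ℝ := (z - θ) ^ 2 * y / 2 + 1 / (2 * y) + z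

theorem rate_set_eq_image_rateOnFiber (θ z : ℝ) :
    {v : ℝ | ∃ x y : ℝ, 0 < y ∧ (x ^ 2 - 1) / (2 * y) = z ∧
        v = θ * (1 - x ^ 2 + θ * y) / 2 + (1 + x ^ 2) ^ 2 / (8 * y)}
      = rateOnFiber θ z '' {y | 0 < y ∧ 0 ≤ 1 + 2 * z * y} := by
  have rate_eq {x y : ℝ} (hy : 0 < y) (hx : x ^ 2 = 1 + 2 * z * y) :
      θ * (1 - x ^ 2 + θ * y) / 2 + (1 + x ^ 2) ^ 2 / (8 * y) = rateOnFiber θ z y := by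
    rw [hx, rateOnFiber]
    field_simp
    ring
  ext v
  constructor
  · rintro ⟨x, y, hy, hxy, rfl⟩
    have hx : x ^ 2 = 1 + 2 * z * y := by
      rw [← hxy]
      field_simp
      ring
    exact ⟨y, ⟨hy, hx ▸ sq_nonneg x⟩, (rate_eq hy hx).symm⟩
  · rintro ⟨y, ⟨hy, hfiber⟩, rfl⟩
    have hx : √(1 + 2 * z * y) ^ 2 = 1 + 2 * z * y := sq_sqrt hfiber
    refine ⟨√(1 + 2 * z * y), y, hy, ?_, (rate_eq hy hx).symm⟩
    rw [hx]
    field_simp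
    ring

theorem two_mul_sub_le_rateOnFiber (θ z : ℝ) {y : ℝ} (hy : 0 < y) :
    2 * z - θ ≤ rateOnFiber θ z y := by
  have hdiff : rateOnFiber θ z y - (2 * z - θ) = ((z - θ) * y - 1) ^ 2 / (2 * y) := by
    rw [rateOnFiber]
    field_simp
    ring
  linarith [div_nonneg (sq_nonneg ((z - θ) * y - 1)) (by positivity : (0 : ℝ) ≤ 2 * y)]

theorem isLeast_rateOnFiber_of_le_three_mul {θ z : ℝ} (h₁ : θ ≤ 3 * z) (h₂ : θ < z) :
    IsLeast (rateOnFiber θ z '' {y | 0 < y ∧ 0 ≤ 1 + 2 * z * y}) (2 * z - θ) := by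
  have hzθ : 0 < z - θ := by linarith
  refine ⟨⟨1 / (z - θ), ⟨by positivity, ?_⟩, ?_⟩, ?_⟩
  · have hsum : 1 + 2 * z * (1 / (z - θ)) = (3 * z - θ) / (z - θ) := by
      field_simp
      ring
    rw [hsum]
    exact div_nonneg (by linarith) hzθ.le
  · rw [rateOnFiber]
    field_simp
    ring
  · rintro _ ⟨y, ⟨hy, -⟩, rfl⟩
    exact two_mul_sub_le_rateOnFiber θ z hy

theorem neg_sq_div_le_rateOnFiber {θ z y : ℝ} (hz : z < 0) (h₁ : 3 * z ≤ θ) (h₂ : θ ≤ -z)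
    (hy : 0 < y) (hfiber : 0 ≤ 1 + 2 * z * y) :
    -(z - θ) ^ 2 / (4 * z) ≤ rateOnFiber θ z y := by
  have hdiff : rateOnFiber θ z y - -(z - θ) ^ 2 / (4 * z)
      = (1 + 2 * z * y) * ((θ - z) ^ 2 * y + 2 * z) / (4 * z * y) := by
    have hz₀ : z ≠ 0 := hz.ne
    rw [rateOnFiber]
    field_simp
    ring
  -- `|θ - z| ≤ -2z`, and the fiber constraint `-2zy ≤ 1`, give `(θ - z)² y ≤ 4z² y ≤ -2z`.
  have hsq : (θ - z) ^ 2 ≤ (2 * z) ^ 2 := by nlinarith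
  have hsecond : (θ - z) ^ 2 * y + 2 * z ≤ 0 := by nlinarith
  have hnum : (1 + 2 * z * y) * ((θ - z) ^ 2 * y + 2 * z) ≤ 0 :=
    mul_nonpos_of_nonneg_of_nonpos hfiber hsecond
  have hden : 4 * z * y ≤ 0 := by nlinarith
  linarith [div_nonneg_of_nonpos hnum hden]

theorem isLeast_rateOnFiber_of_three_mul_le {θ z : ℝ} (hz : z < 0) (h₁ : 3 * z ≤ θ)
    (h₂ : θ ≤ -z) :
    IsLeast (rateOnFiber θ z '' {y | 0 < y ∧ 0 ≤ 1 + 2 * z * y}) (-(z - θ) ^ 2 / (4 * z)) := by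
  have hz₀ : z ≠ 0 := hz.ne
  refine ⟨⟨-1 / (2 * z), ⟨div_pos_of_neg_of_neg (by norm_num) (by linarith), ?_⟩, ?_⟩, ?_⟩
  · field_simp
    norm_num
  · rw [rateOnFiber]
    field_simp
    ring
  · rintro _ ⟨y, ⟨hy, hfiber⟩, rfl⟩
    exact neg_sq_div_le_rateOnFiber hz h₁ h₂ hy hfiber

theorem contraction_rate_function_stable
    (θ : ℝ) (hθ : θ < 0) (z : ℝ) :
    (z ≤ θ / 3 →
      sInf {v : ℝ | ∃ x y : ℝ, 0 < y ∧ (x ^ 2 - 1) / (2 * y) = z ∧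
        v = θ * (1 - x ^ 2 + θ * y) / 2 + (1 + x ^ 2) ^ 2 / (8 * y)}
        = -(z - θ) ^ 2 / (4 * z)) ∧
    (θ / 3 ≤ z →
      sInf {v : ℝ | ∃ x y : ℝ, 0 < y ∧ (x ^ 2 - 1) / (2 * y) = z ∧
        v = θ * (1 - x ^ 2 + θ * y) / 2 + (1 + x ^ 2) ^ 2 / (8 * y)}
        = 2 * z - θ) := by
  rw [rate_set_eq_image_rateOnFiber]
  exact ⟨fun hz => (isLeast_rateOnFiber_of_three_mul_le (by linarith) (by linarith)
      (by linarith)).csInf_eq,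
    fun hz => (isLeast_rateOnFiber_of_le_three_mul (by linarith) (by linarith)).csInf_eq⟩
end

section
/- Let θ < 0, z ∈ ℝ with z ≤ θ/3 and z < 0, and h(y) = θy(θ-2z)/2 + (1+yz)²/(2y) for y > 0. Then inf{ h(y) : y > 0, 1 + 2yz ≥ 0 } = h(-1/(2z)) = -(z-θ)²/(4z). -/
open Real

theorem inf_h_border_case
    (θ z : ℝ) (hθ : θ < 0) (hz : z ≤ θ / 3) (hz' : z < 0) (h : ℝ → ℝ)
    (hdef : ∀ y : ℝ, 0 < y →
      h y = θ * y * (θ - 2 * z) / 2 + (1 + y * z) ^ 2 / (2 * y)) :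
    sInf {v : ℝ | ∃ y : ℝ, 0 < y ∧ 1 + 2 * y * z ≥ 0 ∧ v = h y}
      = h (-1 / (2 * z)) ∧
    h (-1 / (2 * z)) = -(z - θ) ^ 2 / (4 * z) := by
  have hy0 : (0:ℝ) < -1 / (2 * z) := by
    apply div_pos_of_neg_of_neg <;> linarith
  have hzne : (2 * z) ≠ 0 := by linarith
  have hz0 : z ≠ 0 := ne_of_lt hz'
  have part2 : h (-1 / (2 * z)) = -(z - θ) ^ 2 / (4 * z) := by
    rw [hdef _ hy0]
    field_simp
    ring
  have low : ∀ y : ℝ, 0 < y → 1 + 2 * y * z ≥ 0 →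
      -(z - θ) ^ 2 / (4 * z) ≤ h y := by
    intro y hy hb
    have hyne : y ≠ 0 := ne_of_gt hy
    have h1 : (θ - z) ^ 2 ≤ 4 * z ^ 2 := by nlinarith
    have h2 : (θ - z) ^ 2 * y ≤ 4 * z ^ 2 * y :=
      mul_le_mul_of_nonneg_right h1 hy.le
    have h3 : 0 ≤ -2 * z - (θ - z) ^ 2 * y := by nlinarith
    have hden : 0 < -4 * z * y := by nlinarith
    have key : h y - -(z - θ) ^ 2 / (4 * z)
        = (1 + 2 * y * z) * (-2 * z - (θ - z) ^ 2 * y) / (-4 * z * y) := by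
      rw [hdef y hy]
      field_simp
      ring
    have : 0 ≤ h y - -(z - θ) ^ 2 / (4 * z) := by
      rw [key]
      exact div_nonneg (mul_nonneg hb h3) hden.le
    linarith
  have hmem : h (-1 / (2 * z)) ∈
      {v : ℝ | ∃ y : ℝ, 0 < y ∧ 1 + 2 * y * z ≥ 0 ∧ v = h y} := by
    refine ⟨-1 / (2 * z), hy0, ?_, rfl⟩
    have : 2 * (-1 / (2 * z)) * z = -1 := by field_simp
    rw [this]; norm_num
  have hleast : IsLeast {v : ℝ | ∃ y : ℝ, 0 < y ∧ 1 + 2 * y * z ≥ 0 ∧ v = h y}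
      (h (-1 / (2 * z))) := by
    refine ⟨hmem, ?_⟩
    rintro v ⟨y, hy, hb, rfl⟩
    rw [part2]
    exact low y hy hb
  exact ⟨hleast.csInf_eq, part2⟩
end

section
/- Let θ < 0 and z ∈ ℝ with z ≥ θ/3, and h(y) = θy(θ-2z)/2 + (1+yz)²/(2y) for y > 0. Then inf{ h(y) : y > 0, 1 + 2yz ≥ 0 } = h(1/(z-θ)) = 2z - θ. -/
open Real

theorem inf_h_interior_case
    (θ z : ℝ) (hθ : θ < 0) (hz : θ / 3 ≤ z) (h : ℝ → ℝ)
    (hdef : ∀ y : ℝ, 0 < y →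
      h y = θ * y * (θ - 2 * z) / 2 + (1 + y * z) ^ 2 / (2 * y)) :
    sInf {v : ℝ | ∃ y : ℝ, 0 < y ∧ 1 + 2 * y * z ≥ 0 ∧ v = h y}
      = h (1 / (z - θ)) ∧
    h (1 / (z - θ)) = 2 * z - θ := by
  have hzθ : 0 < z - θ := by linarith
  have hy0 : 0 < 1 / (z - θ) := by positivity
  have hval : h (1 / (z - θ)) = 2 * z - θ := by
    rw [hdef _ hy0]
    field_simp
    ring
  have key : ∀ y : ℝ, 0 < y → 2 * z - θ ≤ h y := by
    intro y hy
    rw [hdef y hy]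
    have e : θ * y * (θ - 2 * z) / 2 + (1 + y * z) ^ 2 / (2 * y) - (2 * z - θ)
        = ((z - θ) * y - 1) ^ 2 / (2 * y) := by
      field_simp
      ring
    nlinarith [sq_nonneg ((z - θ) * y - 1), div_nonneg (sq_nonneg ((z - θ) * y - 1)) (by positivity : (0:ℝ) ≤ 2 * y), e]
  have hmem : h (1 / (z - θ)) ∈ {v : ℝ | ∃ y : ℝ, 0 < y ∧ 1 + 2 * y * z ≥ 0 ∧ v = h y} := by
    refine ⟨1 / (z - θ), hy0, ?_, rfl⟩
    rw [ge_iff_le, ← sub_nonneg]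
    have : 1 + 2 * (1 / (z - θ)) * z - 0 = (3 * z - θ) / (z - θ) := by
      field_simp
      ring
    rw [this]
    apply div_nonneg _ hzθ.le
    linarith
  constructor
  · apply le_antisymm
    · exact csInf_le ⟨2 * z - θ, fun v ⟨y, hy, _, hv⟩ => hv ▸ key y hy⟩ hmem
    · rw [hval]
      exact le_csInf ⟨_, hmem⟩ (fun v ⟨y, hy, _, hv⟩ => hv ▸ key y hy)
  · exact hval
end

section
/- Define I₀(x,y) = (1+x²)²/(8y) for y > 0 (and +∞ for y ≤ 0). For any c < 0, over the compact set Δ_c = {(x,y) : |x| ≤ 1, 0 ≤ y ≤ (x²-1)/(2c)}, the infimum of I₀ equals I₀(0, -1/(2c)) = -c/4. -/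
open Real

theorem inf_rate_unstable_negative_c
    (I₀ : ℝ → ℝ → EReal)
    (hI : ∀ x y : ℝ, (0 < y → I₀ x y = (((1 + x ^ 2) ^ 2 / (8 * y) : ℝ) : EReal)) ∧
      (y ≤ 0 → I₀ x y = ⊤))
    (c : ℝ) (hc : c < 0) :
    sInf {v : EReal | ∃ x y : ℝ, |x| ≤ 1 ∧ 0 ≤ y ∧ y ≤ (x ^ 2 - 1) / (2 * c) ∧
        v = I₀ x y}
      = I₀ 0 (-1 / (2 * c)) ∧
    I₀ 0 (-1 / (2 * c)) = ((-c / 4 : ℝ) : EReal) := by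
  have h2c : 2 * c < 0 := by linarith
  have ht : (0:ℝ) < -1 / (2 * c) := div_pos_of_neg_of_neg (by norm_num) h2c
  have hval : I₀ 0 (-1 / (2 * c)) = ((-c / 4 : ℝ) : EReal) := by
    rw [(hI 0 _).1 ht]
    congr 1
    field_simp
    ring
  refine ⟨?_, hval⟩
  apply le_antisymm
  · apply sInf_le
    exact ⟨0, -1 / (2 * c), by norm_num, le_of_lt ht, by norm_num, rfl⟩
  · rw [hval]
    apply le_sInf
    rintro v ⟨x, y, hx, hy0, hyc, rfl⟩
    rcases lt_or_ge 0 y with hy | hy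
    · rw [(hI x y).1 hy, EReal.coe_le_coe_iff]
      rw [le_div_iff₀ (by linarith : (0:ℝ) < 8 * y)]
      have h1 : x ^ 2 - 1 ≤ y * (2 * c) := (le_div_iff_of_neg h2c).mp hyc
      nlinarith [sq_nonneg x, sq_nonneg (x^2)]
    · rw [(hI x y).2 hy]; exact le_top
end

section
/- Define I₀(x,y) = (1+x²)²/(8y) for y > 0 (and +∞ for y ≤ 0). For any c > 0 and any α ≥ √3, over the set Δ_{c,α} = {(x,y) : 1 ≤ |x| ≤ α, 0 < y ≤ (x²-1)/(2c)}, the infimum of I₀ equals I₀(√3, 1/c) = 2c. -/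
open Real

theorem inf_rate_unstable_positive_c
    (c α : ℝ) (hc : 0 < c) (hα : Real.sqrt 3 ≤ α) :
    sInf {v : ℝ | ∃ x y : ℝ, 1 ≤ |x| ∧ |x| ≤ α ∧ 0 < y ∧
        y ≤ (x ^ 2 - 1) / (2 * c) ∧ v = (1 + x ^ 2) ^ 2 / (8 * y)}
      = (1 + Real.sqrt 3 ^ 2) ^ 2 / (8 * (1 / c)) ∧
    (1 + Real.sqrt 3 ^ 2) ^ 2 / (8 * (1 / c)) = 2 * c := by
  have h3 : Real.sqrt 3 ^ 2 = 3 := Real.sq_sqrt (by norm_num)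
  have hval : (1 + Real.sqrt 3 ^ 2) ^ 2 / (8 * (1 / c)) = 2 * c := by
    rw [h3]; field_simp; ring
  refine ⟨?_, hval⟩
  rw [hval]
  have hmem : (2 * c) ∈ {v : ℝ | ∃ x y : ℝ, 1 ≤ |x| ∧ |x| ≤ α ∧ 0 < y ∧
        y ≤ (x ^ 2 - 1) / (2 * c) ∧ v = (1 + x ^ 2) ^ 2 / (8 * y)} := by
    refine ⟨Real.sqrt 3, 1 / c, ?_, ?_, by positivity, ?_, ?_⟩
    · rw [abs_of_nonneg (Real.sqrt_nonneg 3)]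
      nlinarith [Real.sq_sqrt (by norm_num : (3:ℝ) ≥ 0), Real.sqrt_nonneg 3]
    · rw [abs_of_nonneg (Real.sqrt_nonneg 3)]; exact hα
    · rw [h3]; rw [div_le_div_iff₀ (by positivity) (by positivity)]; ring_nf; exact le_rfl
    · rw [h3]; field_simp; ring
  have hlb : ∀ v ∈ {v : ℝ | ∃ x y : ℝ, 1 ≤ |x| ∧ |x| ≤ α ∧ 0 < y ∧
        y ≤ (x ^ 2 - 1) / (2 * c) ∧ v = (1 + x ^ 2) ^ 2 / (8 * y)}, 2 * c ≤ v := by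
    rintro v ⟨x, y, hx1, hxα, hy, hy2, rfl⟩
    have h1 : y * (2 * c) ≤ x ^ 2 - 1 := (le_div_iff₀ (by positivity)).mp hy2
    rw [le_div_iff₀ (by positivity)]
    nlinarith [sq_nonneg (x ^ 2 - 3)]
  exact le_antisymm (csInf_le ⟨2 * c, hlb⟩ hmem) (le_csInf ⟨2 * c, hmem⟩ hlb)
end

section
/- Let θ > 0 and define I_θ as in the explosive case. For any c with -θ ≤ c < 0, the infimum of I_θ over the compact set Δ_c = {(x,y) : |x| ≤ 1, 0 ≤ y ≤ (x²-1)/(2c)} equals I_θ(0, -1/(2c)) = θ; while for c < -θ this infimum equals -(c-θ)²/(4c). -/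
open Real

theorem inf_rate_explosive_negative_c
    (θ : ℝ) (hθ : 0 < θ) (I : ℝ → ℝ → EReal)
    (hI1 : ∀ x y : ℝ, 0 < y → y < (1 + x ^ 2) / (2 * θ) →
      I x y = ((θ * (1 - x ^ 2 + θ * y) / 2 + (1 + x ^ 2) ^ 2 / (8 * y) : ℝ) : EReal))
    (hI2 : ∀ x y : ℝ, (1 + x ^ 2) / (2 * θ) ≤ y → I x y = ((θ : ℝ) : EReal))
    (hI3 : ∀ x y : ℝ, y ≤ 0 → I x y = ⊤)
    (c : ℝ) (hc : c < 0) :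
    (-θ ≤ c →
      sInf {v : EReal | ∃ x y : ℝ, |x| ≤ 1 ∧ 0 ≤ y ∧ y ≤ (x ^ 2 - 1) / (2 * c) ∧
          v = I x y}
        = I 0 (-1 / (2 * c)) ∧ I 0 (-1 / (2 * c)) = ((θ : ℝ) : EReal)) ∧
    (c < -θ →
      sInf {v : EReal | ∃ x y : ℝ, |x| ≤ 1 ∧ 0 ≤ y ∧ y ≤ (x ^ 2 - 1) / (2 * c) ∧
          v = I x y}
        = ((-(c - θ) ^ 2 / (4 * c) : ℝ) : EReal)) := by
  have hc0 : c ≠ 0 := ne_of_lt hc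
  have hnc : (0:ℝ) < -(2 * c) := by linarith
  have hy0 : (0:ℝ) < -1 / (2 * c) := by
    rw [show -1 / (2 * c) = 1 / (-(2 * c)) by ring]
    positivity
  -- membership data for the point (0, -1/(2c))
  have hmemy : -1 / (2 * c) ≤ ((0:ℝ) ^ 2 - 1) / (2 * c) := by
    rw [show ((0:ℝ) ^ 2 - 1) / (2 * c) = -1 / (2 * c) by ring]
  constructor
  · intro hcθ
    -- I 0 (-1/(2c)) = θ via region 2
    have hreg : (1 + (0:ℝ) ^ 2) / (2 * θ) ≤ -1 / (2 * c) := by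
      rw [show (1 + (0:ℝ) ^ 2) / (2 * θ) = 1 / (2 * θ) by ring,
        show -1 / (2 * c) = 1 / (-(2 * c)) by ring]
      exact one_div_le_one_div_of_le hnc (by linarith)
    have hIval : I 0 (-1 / (2 * c)) = ((θ : ℝ) : EReal) := hI2 0 _ hreg
    refine ⟨?_, hIval⟩
    apply le_antisymm
    · exact sInf_le ⟨0, -1 / (2 * c), by norm_num, hy0.le, hmemy, rfl⟩
    · rw [hIval]
      apply le_sInf
      rintro v ⟨x, y, hx, hy, hyc, rfl⟩
      rcases le_or_gt y 0 with h | h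
      · rw [hI3 x y h]; exact le_top
      rcases le_or_gt ((1 + x ^ 2) / (2 * θ)) y with h2 | h2
      · rw [hI2 x y h2]
      · rw [hI1 x y h h2]
        apply EReal.coe_le_coe_iff.mpr
        have h8 : (0:ℝ) < 8 * y := by linarith
        have key : θ * (1 - x ^ 2 + θ * y) / 2 + (1 + x ^ 2) ^ 2 / (8 * y) - θ
            = (2 * θ * y - (1 + x ^ 2)) ^ 2 / (8 * y) := by
          field_simp
          ring
        have h9 : (0:ℝ) ≤ (2 * θ * y - (1 + x ^ 2)) ^ 2 / (8 * y) :=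
          div_nonneg (sq_nonneg _) h8.le
        linarith
  · intro hcθ
    have hreg : -1 / (2 * c) < (1 + (0:ℝ) ^ 2) / (2 * θ) := by
      rw [show (1 + (0:ℝ) ^ 2) / (2 * θ) = 1 / (2 * θ) by ring,
        show -1 / (2 * c) = 1 / (-(2 * c)) by ring]
      exact one_div_lt_one_div_of_lt (by linarith) (by linarith)
    have hval : θ * (1 - (0:ℝ) ^ 2 + θ * (-1 / (2 * c))) / 2
        + (1 + (0:ℝ) ^ 2) ^ 2 / (8 * (-1 / (2 * c))) = -(c - θ) ^ 2 / (4 * c) := by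
      field_simp
      ring
    have hIval : I 0 (-1 / (2 * c)) = ((-(c - θ) ^ 2 / (4 * c) : ℝ) : EReal) := by
      rw [hI1 0 _ hy0 hreg, hval]
    apply le_antisymm
    · exact sInf_le ⟨0, -1 / (2 * c), by norm_num, hy0.le, hmemy, hIval.symm⟩
    · apply le_sInf
      rintro v ⟨x, y, hx, hy, hyc, rfl⟩
      rcases le_or_gt y 0 with h | h
      · rw [hI3 x y h]; exact le_top
      have hxy : x ^ 2 ≤ 1 + 2 * c * y := by
        have h2c : 2 * c < 0 := by linarith
        have := (le_div_iff_of_neg h2c).mp hyc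
        nlinarith
      have ha : (0:ℝ) ≤ 1 + 2 * c * y := le_trans (sq_nonneg x) hxy
      have hreg2 : y < (1 + x ^ 2) / (2 * θ) := by
        rw [lt_div_iff₀ (by linarith : (0:ℝ) < 2 * θ)]
        nlinarith
      rw [hI1 x y h hreg2]
      apply EReal.coe_le_coe_iff.mpr
      have hb : (0:ℝ) ≤ -c - 2 * θ ^ 2 * y := by
        nlinarith [mul_nonneg ha (neg_nonneg.2 hc.le), mul_pos h hθ,
          mul_pos h (show (0:ℝ) < -c - θ by linarith)]
      have hc2 : (0:ℝ) ≤ 2 + x ^ 2 - 4 * θ * y := by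
        nlinarith [mul_pos h (show (0:ℝ) < -c - θ by linarith)]
      have hden : (0:ℝ) < -32 * c * y := by nlinarith
      have key : θ * (1 - x ^ 2 + θ * y) / 2 + (1 + x ^ 2) ^ 2 / (8 * y)
          - (-(c - θ) ^ 2 / (4 * c))
          = (4 * (1 + 2 * c * y) * (-c - 2 * θ ^ 2 * y)
            + (-4 * c) * (x ^ 2 * (2 + x ^ 2 - 4 * θ * y))) / (-32 * c * y) := by
        field_simp
        ring
      have hnum : (0:ℝ) ≤ 4 * (1 + 2 * c * y) * (-c - 2 * θ ^ 2 * y)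
          + (-4 * c) * (x ^ 2 * (2 + x ^ 2 - 4 * θ * y)) := by
        have t1 : (0:ℝ) ≤ 4 * (1 + 2 * c * y) * (-c - 2 * θ ^ 2 * y) :=
          mul_nonneg (by linarith) hb
        have t2 : (0:ℝ) ≤ (-4 * c) * (x ^ 2 * (2 + x ^ 2 - 4 * θ * y)) :=
          mul_nonneg (by linarith) (mul_nonneg (sq_nonneg x) hc2)
        linarith
      have := div_nonneg hnum hden.le
      linarith
end
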